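/- arXiv:1410.4488 — 2 statements merged into one kernel-verified Lean document; each statement's English description precedes it below -/
import Mathlib

section
/- A reversible Mealy automaton A = (Q, Σ, δ, ρ) generates a finite semigroup if and only if the sizes of the connected components of its powers are bounded: the semigroup ⟨A⟩⁺ is finite if and only if there exists N such that for every n ≥ 1 and every u ∈ Qⁿ, the connected component of u in A^n has cardinality at most N. -/
/-!
Mealy automata: common definitions.

A Mealy automaton on stateset `Q` and alphabet `Γ` is given by transition
functions `δ : Γ → Q → Q` (for each input letter) and output functions
`ρ : Q → Γ → Γ` (for each state); it has a transition `x —i|j→ y` exactly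
when `δ i x = y` and `ρ x i = j`.
-/

/-- Extended output function `ρ_x : Γ* → Γ*` of a single state. -/
def rhoStar {Q Γ : Type*} (δ : Γ → Q → Q) (ρ : Q → Γ → Γ) : Q → List Γ → List Γ
  | _, [] => []
  | x, i :: s => ρ x i :: rhoStar δ ρ (δ i x) s

/-- `ρ_u : Γ* → Γ*` for a word `u = x₁⋯x_n` of states: `ρ_u = ρ_{x_n} ∘ ⋯ ∘ ρ_{x₁}`. -/
def rhoWord {Q Γ : Type*} (δ : Γ → Q → Q) (ρ : Q → Γ → Γ) : List Q → List Γ → List Γ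
  | [], s => s
  | x :: u, s => rhoWord δ ρ u (rhoStar δ ρ x s)

/-- `ρ_u : Γ → Γ` on single letters (the output function of the power automaton). -/
def rhoLetter {Q Γ : Type*} (ρ : Q → Γ → Γ) : List Q → Γ → Γ
  | [], i => i
  | x :: u, i => rhoLetter ρ u (ρ x i)

/-- Extended transition function `δ_i : Q* → Q*` (the transition function of powers). -/
def deltaStar {Q Γ : Type*} (δ : Γ → Q → Q) (ρ : Q → Γ → Γ) : Γ → List Q → List Q
  | _, [] => []
  | i, x :: u => δ i x :: deltaStar δ ρ (ρ x i) u

/-- Sequential application `δ_s = δ_{s_n} ∘ ⋯ ∘ δ_{s₁}` of the letters of a word `s`. -/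
def applyWord {S Γ : Type*} (d : Γ → S → S) : List Γ → S → S
  | [], x => x
  | i :: s, x => applyWord d s (d i x)

/-- The orbit `{δ_s(x) : s ∈ Γ*}` of a state: for reversible automata this is
exactly the (strongly) connected component of `x`. -/
def orbitOf {S Γ : Type*} (d : Γ → S → S) (x : S) : Set S :=
  {y | ∃ s : List Γ, applyWord d s x = y}

/-- An automaton is invertible when every output function is a permutation. -/
def MInvertible {Q Γ : Type*} (ρ : Q → Γ → Γ) : Prop := ∀ x, Function.Bijective (ρ x)

/-- An automaton is reversible when every transition function is a permutation. -/
def MReversible {Q Γ : Type*} (δ : Γ → Q → Q) : Prop := ∀ i, Function.Bijective (δ i)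

/-- Coreversibility: `δ_i(y) = δ_{i'}(z)` and `ρ_y(i) = ρ_z(i')` imply `y = z`. -/
def MCoreversible {Q Γ : Type*} (δ : Γ → Q → Q) (ρ : Q → Γ → Γ) : Prop :=
  ∀ y z : Q, ∀ i i' : Γ, δ i y = δ i' z → ρ y i = ρ z i' → y = z

/-- Bireversible: invertible, reversible and coreversible. -/
def MBireversible {Q Γ : Type*} (δ : Γ → Q → Q) (ρ : Q → Γ → Γ) : Prop :=
  MInvertible ρ ∧ MReversible δ ∧ MCoreversible δ ρ

/-- Connectedness: every state is reachable from every state. -/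
def MConnected {Q Γ : Type*} (δ : Γ → Q → Q) : Prop :=
  ∀ x y : Q, ∃ s : List Γ, applyWord δ s x = y

/-- Invertibility of a component `C` (as an automaton with stateset `C`). -/
def CompInvertible {S Γ : Type*} (r : S → Γ → Γ) (C : Set S) : Prop :=
  ∀ x ∈ C, Function.Bijective (r x)

/-- Reversibility of a component `C`: each transition function permutes `C`. -/
def CompReversible {S Γ : Type*} (d : Γ → S → S) (C : Set S) : Prop :=
  ∀ i : Γ, Set.BijOn (d i) C C

/-- Coreversibility of a component `C` (as an automaton with stateset `C`). -/
def CompCoreversible {S Γ : Type*} (d : Γ → S → S) (r : S → Γ → Γ) (C : Set S) : Prop :=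
  ∀ y ∈ C, ∀ z ∈ C, ∀ i i' : Γ, d i y = d i' z → r y i = r z i' → y = z

/-- Bireversibility of a component `C` (as an automaton with stateset `C`). -/
def CompBireversible {S Γ : Type*} (d : Γ → S → S) (r : S → Γ → Γ) (C : Set S) : Prop :=
  CompInvertible r C ∧ CompReversible d C ∧ CompCoreversible d r C

/-- Transition functions of the product `A × B` of two Mealy automata. -/
def prodD {Q Q' Γ : Type*} (δ : Γ → Q → Q) (ρ : Q → Γ → Γ) (δ' : Γ → Q' → Q') :
    Γ → Q × Q' → Q × Q' :=
  fun i p => (δ i p.1, δ' (ρ p.1 i) p.2)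

/-- Output functions of the product `A × B` of two Mealy automata. -/
def prodR {Q Q' Γ : Type*} (ρ : Q → Γ → Γ) (ρ' : Q' → Γ → Γ) : Q × Q' → Γ → Γ :=
  fun p i => ρ' p.2 (ρ p.1 i)

/-- `u^n`: the `n`-fold concatenation of a word with itself. -/
def wordPow {Q : Type*} (u : List Q) : ℕ → List Q
  | 0 => []
  | n + 1 => u ++ wordPow u n


/-!
If `⟨A⟩⁺` is finite, then `δ_s` on `Q*` is determined by the finitely many maps `δ_{g(s)} : Q → Q`,
`g ∈ ⟨A⟩⁺ ∪ {id}`, because `δ_s(x·u) = δ_s(x)·δ_{ρ_x(s)}(u)`; so all orbits in the powers have size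
at most `|Q^Q| ^ (|⟨A⟩⁺| + 1)`. Conversely, `ρ_u` is the output function of the state `u` of the
automaton obtained by restricting `A^n` to the component of `u`; if components have at most `N`
elements, every `ρ_u` is an output function of one of the finitely many automata on `Fin N`.
-/

theorem Set.ncard_range_le_of_factorsThrough {α β K : Type*} [Nonempty α] [Finite K]
    {f : α → β} {κ : α → K} (h : f.FactorsThrough κ) : (Set.range f).ncard ≤ Nat.card K := by
  have hsub : Set.range f ⊆ Set.range (f ∘ Function.invFun κ) := by
    rintro _ ⟨a, rfl⟩
    exact ⟨κ a, h (Function.invFun_eq ⟨a, rfl⟩)⟩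
  calc (Set.range f).ncard ≤ (Set.range (f ∘ Function.invFun κ)).ncard :=
        Set.ncard_le_ncard hsub (Set.finite_range _)
    _ ≤ Nat.card K := by
        rw [← Nat.card_coe_set_eq]
        exact Finite.card_range_le _

section Mealy

variable {Q Γ : Type*}

theorem applyWord_append {S : Type*} (d : Γ → S → S) (s t : List Γ) (x : S) :
    applyWord d (s ++ t) x = applyWord d t (applyWord d s x) := by
  induction s generalizing x with
  | nil => rfl
  | cons i s ih => exact ih _

theorem apply_mem_orbitOf {S : Type*} (d : Γ → S → S) {x y : S} (hy : y ∈ orbitOf d x)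
    (i : Γ) : d i y ∈ orbitOf d x := by
  obtain ⟨s, rfl⟩ := hy
  exact ⟨s ++ [i], applyWord_append d s [i] x⟩

theorem rhoStar_map {W W' : Type*} {d : Γ → W → W} {r : W → Γ → Γ} {d' : Γ → W' → W'}
    {r' : W' → Γ → Γ} (f : W → W') (hd : ∀ i w, d' i (f w) = f (d i w))
    (hr : ∀ w, r' (f w) = r w) (w : W) (s : List Γ) :
    rhoStar d' r' (f w) s = rhoStar d r w s := by
  induction s generalizing w with
  | nil => rfl
  | cons i s ih => simp only [rhoStar, hd, hr, ih]

variable (δ : Γ → Q → Q) (ρ : Q → Γ → Γ)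

theorem rhoWord_nil_right (u : List Q) : rhoWord δ ρ u [] = [] := by
  induction u with
  | nil => rfl
  | cons x u ih => exact ih

theorem rhoWord_cons_right (u : List Q) (i : Γ) (s : List Γ) :
    rhoWord δ ρ u (i :: s) = rhoLetter ρ u i :: rhoWord δ ρ (deltaStar δ ρ i u) s := by
  induction u generalizing i s with
  | nil => rfl
  | cons x u ih => exact ih _ _

theorem rhoWord_eq_rhoStar (u : List Q) :
    rhoWord δ ρ u = rhoStar (deltaStar δ ρ) (rhoLetter ρ) u := by
  funext s
  induction s generalizing u with
  | nil => exact rhoWord_nil_right δ ρ u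
  | cons i s ih => rw [rhoWord_cons_right, ih, rhoStar]

theorem deltaStar_length (i : Γ) (u : List Q) : (deltaStar δ ρ i u).length = u.length := by
  induction u generalizing i with
  | nil => rfl
  | cons x u ih => simp only [deltaStar, List.length_cons, ih]

theorem applyWord_deltaStar_length (s : List Γ) (u : List Q) :
    (applyWord (deltaStar δ ρ) s u).length = u.length := by
  induction s generalizing u with
  | nil => rfl
  | cons i s ih => rw [applyWord, ih, deltaStar_length]

theorem applyWord_deltaStar_nil (s : List Γ) : applyWord (deltaStar δ ρ) s ([] : List Q) = [] := by
  induction s with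
  | nil => rfl
  | cons i s ih => exact ih

theorem applyWord_deltaStar_cons (s : List Γ) (x : Q) (u : List Q) :
    applyWord (deltaStar δ ρ) s (x :: u)
      = applyWord δ s x :: applyWord (deltaStar δ ρ) (rhoStar δ ρ x s) u := by
  induction s generalizing x u with
  | nil => rfl
  | cons i s ih => exact ih _ _

theorem applyWord_deltaStar_congr {s t : List Γ}
    (h : ∀ v x, applyWord δ (rhoWord δ ρ v s) x = applyWord δ (rhoWord δ ρ v t) x) (u : List Q) :
    applyWord (deltaStar δ ρ) s u = applyWord (deltaStar δ ρ) t u := by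
  induction u generalizing s t with
  | nil => rw [applyWord_deltaStar_nil, applyWord_deltaStar_nil]
  | cons x u ih =>
    rw [applyWord_deltaStar_cons, applyWord_deltaStar_cons, ih fun v => h (x :: v)]
    exact congrArg (· :: _) (h [] x)

theorem finite_range_rhoWord
    (hS : {f : List Γ → List Γ | ∃ u : List Q, u ≠ [] ∧ rhoWord δ ρ u = f}.Finite) :
    (Set.range (rhoWord δ ρ)).Finite := by
  refine (hS.insert id).subset ?_
  rintro _ ⟨_ | ⟨x, u⟩, rfl⟩
  · exact Set.mem_insert _ _
  · exact Set.mem_insert_of_mem _ ⟨_, List.cons_ne_nil x u, rfl⟩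

theorem ncard_orbitOf_deltaStar_le [Finite Q] (hM : (Set.range (rhoWord δ ρ)).Finite)
    (u : List Q) :
    (orbitOf (deltaStar δ ρ) u).ncard ≤ Nat.card (Set.range (rhoWord δ ρ) → Q → Q) := by
  have := hM.to_subtype
  refine Set.ncard_range_le_of_factorsThrough
    (κ := fun s (g : Set.range (rhoWord δ ρ)) => applyWord δ (g.1 s)) fun s t hst => ?_
  refine applyWord_deltaStar_congr δ ρ (fun v => ?_) u
  exact congrFun (congrFun hst ⟨rhoWord δ ρ v, v, rfl⟩)

theorem finite_orbitOf_deltaStar [Finite Q] (u : List Q) :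
    (orbitOf (deltaStar δ ρ) u).Finite := by
  refine (List.finite_length_eq Q u.length).subset ?_
  rintro _ ⟨s, rfl⟩
  exact applyWord_deltaStar_length δ ρ s u

end Mealy

def finStateOutputs (Γ : Type*) (N : ℕ) : Set (List Γ → List Γ) :=
  Set.range fun A : (Γ → Fin N → Fin N) × (Fin N → Γ → Γ) × Fin N => rhoStar A.1 A.2.1 A.2.2

theorem finite_finStateOutputs (Γ : Type*) [Finite Γ] (N : ℕ) : (finStateOutputs Γ N).Finite :=
  Set.finite_range _

theorem rhoStar_mem_finStateOutputs {S Γ : Type*} (d : Γ → S → S) (r : S → Γ → Γ) {x : S}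
    {N : ℕ} (hfin : (orbitOf d x).Finite) (hN : (orbitOf d x).ncard ≤ N) :
    rhoStar d r x ∈ finStateOutputs Γ N := by
  set C := orbitOf d x
  have := hfin.to_subtype
  let dC : Γ → C → C := fun i y => ⟨d i y, apply_mem_orbitOf d y.2 i⟩
  let rC : C → Γ → Γ := fun y => r y
  let e : C ↪ Fin N := (Finite.equivFin C).toEmbedding.trans
    (Fin.castLEEmb (by rwa [Nat.card_coe_set_eq]))
  -- the values of `d'` and `r'` off the image of `e` are never visited by a run from `e x₀`
  let d' : Γ → Fin N → Fin N := fun i => Function.extend e (fun y => e (dC i y)) id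
  let r' : Fin N → Γ → Γ := Function.extend e rC fun _ => id
  let x₀ : C := ⟨x, [], rfl⟩
  refine ⟨(d', r', e x₀), funext fun s => ?_⟩
  calc rhoStar d' r' (e x₀) s = rhoStar dC rC x₀ s :=
        rhoStar_map e (fun i y => e.injective.extend_apply _ _ y) (e.injective.extend_apply _ _) _ s
    _ = rhoStar d r x s := (rhoStar_map Subtype.val (fun _ _ => rfl) (fun _ => rfl) x₀ s).symm

theorem finite_semigroup_iff_bounded_components_general
    {Q Γ : Type*} [Fintype Q] [Fintype Γ]
    (δ : Γ → Q → Q) (ρ : Q → Γ → Γ) :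
    Set.Finite {f : List Γ → List Γ | ∃ u : List Q, u ≠ [] ∧ rhoWord δ ρ u = f} ↔
      ∃ N : ℕ, ∀ n : ℕ, 1 ≤ n → ∀ u : List Q, u.length = n →
        (orbitOf (deltaStar δ ρ) u).ncard ≤ N := by
  constructor
  · intro hS
    exact ⟨_, fun _ _ u _ => ncard_orbitOf_deltaStar_le δ ρ (finite_range_rhoWord δ ρ hS) u⟩
  · rintro ⟨N, hN⟩
    refine (finite_finStateOutputs Γ N).subset ?_
    rintro _ ⟨u, hu, rfl⟩
    rw [rhoWord_eq_rhoStar]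
    exact rhoStar_mem_finStateOutputs _ _ (finite_orbitOf_deltaStar δ ρ u)
      (hN _ (List.length_pos_of_ne_nil hu) u rfl)

/-- A reversible Mealy automaton generates a finite
semigroup if and only if the sizes of the connected components of its powers
are bounded. -/
theorem finite_semigroup_iff_bounded_components
    {Q Γ : Type*} [Fintype Q] [Fintype Γ] [Nonempty Q] [Nonempty Γ]
    (δ : Γ → Q → Q) (ρ : Q → Γ → Γ)
    (hRev : MReversible δ) :
    Set.Finite {f : List Γ → List Γ | ∃ u : List Q, u ≠ [] ∧ rhoWord δ ρ u = f} ↔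
      ∃ N : ℕ, ∀ n : ℕ, 1 ≤ n → ∀ u : List Q, u.length = n →
        (orbitOf (deltaStar δ ρ) u).ncard ≤ N :=
  finite_semigroup_iff_bounded_components_general δ ρ
end

section
/- Any invertible reversible non-bireversible Mealy automaton generates an infinite group: if A = (Q, Σ, δ, ρ) is invertible, reversible and not bireversible, then the group of length-preserving bijections of Σ* generated by {ρ_x : x ∈ Q} is infinite. -/
/-!
Failure of coreversibility gives states `y ≠ z` and letters `i, i'` with `δ_i(y) = δ_{i'}(z)` and
`ρ_y(i) = ρ_z(i')`. If the group were finite, `ρ_y` would have finite order `m`, so the state word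
`u = z y^(m-1)` maps `i' s` to `i s` for every word `s`. Its section at `i'`, and hence every
iterated section, then acts trivially. By reversibility `δ_{i'}` permutes the finitely many state
words of length `|u|`, so `u` is one of its own iterated sections and `ρ_u = id`. Thus `i = i'`,
and reversibility turns `δ_i(y) = δ_i(z)` into `y = z`.
-/

section MealyAutomaton

variable {Q Γ : Type*} (δ : Γ → Q → Q) (ρ : Q → Γ → Γ)

theorem rhoStar_injective (hρ : ∀ x, Function.Injective (ρ x)) (x : Q) :
    Function.Injective (rhoStar δ ρ x) := by
  intro s t hst
  induction s generalizing x t with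
  | nil => cases t <;> simp_all [rhoStar]
  | cons i s ih =>
    cases t with
    | nil => simp [rhoStar] at hst
    | cons j t =>
      simp only [rhoStar, List.cons.injEq] at hst
      obtain rfl := hρ x hst.1
      rw [ih _ hst.2]

theorem rhoWord_replicate (y : Q) (k : ℕ) :
    rhoWord δ ρ (List.replicate k y) = (rhoStar δ ρ y)^[k] := by
  induction k with
  | zero => rfl
  | succ k ih => funext s; exact congrFun ih (rhoStar δ ρ y s)

theorem rhoWord_cons (u : List Q) (j : Γ) (s : List Γ) :
    rhoWord δ ρ u (j :: s) = rhoLetter ρ u j :: rhoWord δ ρ (deltaStar δ ρ j u) s := by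
  induction u generalizing j s with
  | nil => rfl
  | cons x v ih => exact ih (ρ x j) (rhoStar δ ρ (δ j x) s)

theorem length_deltaStar (j : Γ) (u : List Q) : (deltaStar δ ρ j u).length = u.length := by
  induction u generalizing j with
  | nil => rfl
  | cons x u ih => simp [deltaStar, ih]

theorem deltaStar_injective (hδ : ∀ i, Function.Injective (δ i)) (j : Γ) :
    Function.Injective (deltaStar δ ρ j) := by
  intro u v huv
  induction u generalizing j v with
  | nil => cases v <;> simp_all [deltaStar]
  | cons x u ih =>
    cases v with
    | nil => simp [deltaStar] at huv
    | cons y v =>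
      simp only [deltaStar, List.cons.injEq] at huv
      obtain rfl := hδ j huv.1
      rw [ih _ huv.2]

theorem rhoWord_deltaStar_eq_id {u : List Q} {j k : Γ}
    (h : ∀ s, rhoWord δ ρ u (j :: s) = k :: s) : rhoWord δ ρ (deltaStar δ ρ j u) = id := by
  funext s
  have := h s
  rw [rhoWord_cons, List.cons.injEq] at this
  exact this.2

theorem mem_periodicPts_deltaStar [Finite Q] (hδ : ∀ i, Function.Injective (δ i))
    (j : Γ) (u : List Q) : u ∈ Function.periodicPts (deltaStar δ ρ j) := by
  have hlen (n : ℕ) : (deltaStar δ ρ j)^[n] u ∈ {v : List Q | v.length = u.length} := by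
    induction n with
    | zero => rfl
    | succ n ih => rw [Function.iterate_succ_apply', Set.mem_ofPred_eq, length_deltaStar]; exact ih
  obtain ⟨m, n, hmn, heq⟩ :=
    (List.finite_length_eq Q u.length).exists_lt_map_eq_of_forall_mem hlen
  exact Function.mk_mem_periodicPts (by omega)
    (Function.iterate_cancel (deltaStar_injective δ ρ hδ j) heq.symm)

theorem eq_of_rhoWord_cons_eq [Finite Q] (hδ : ∀ i, Function.Injective (δ i))
    {u : List Q} {j k : Γ} (h : ∀ s, rhoWord δ ρ u (j :: s) = k :: s) : k = j := by
  have hsection (n : ℕ) : rhoWord δ ρ ((deltaStar δ ρ j)^[n + 1] u) = id := by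
    induction n with
    | zero => exact rhoWord_deltaStar_eq_id δ ρ h
    | succ n ih =>
      rw [Function.iterate_succ_apply']
      exact rhoWord_deltaStar_eq_id δ ρ (k := j) (by simp only [ih, id, implies_true])
  obtain ⟨n, hn, hper⟩ := mem_periodicPts_deltaStar δ ρ hδ j u
  have hid : rhoWord δ ρ u = id := by
    rw [← hper, ← Nat.sub_add_cancel hn]
    exact hsection _
  simpa [hid] using (h []).symm

end MealyAutomaton

theorem exists_iterate_eq_id_of_finite_submonoid {α : Type*} {S : Submonoid (Function.End α)}
    (hS : (S : Set (Function.End α)).Finite) {f : Function.End α} (hf : f ∈ S)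
    (hinj : Function.Injective f) : ∃ m, 0 < m ∧ f^[m] = id := by
  obtain ⟨p, q, hpq, heq⟩ :=
    hS.exists_lt_map_eq_of_forall_mem (f := fun n : ℕ => f ^ n) (fun n => pow_mem hf n)
  refine ⟨q - p, by omega, funext fun s => Function.iterate_cancel hinj ?_⟩
  exact (congrFun heq s).symm

theorem infinite_group_of_invertible_reversible_nonbireversible_general
    {Q Γ : Type*} [Fintype Q]
    (δ : Γ → Q → Q) (ρ : Q → Γ → Γ)
    (hInv : MInvertible ρ) (hRev : MReversible δ) (hNotBir : ¬ MBireversible δ ρ) :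
    Set.Infinite
      ((Submonoid.closure
          {f : Function.End (List Γ) |
            ∃ x : Q, f = rhoStar δ ρ x ∨ f = Function.invFun (rhoStar δ ρ x)} :
          Submonoid (Function.End (List Γ))) : Set (Function.End (List Γ))) := by
  obtain ⟨y, z, i, i', hδ, hρ, hyz⟩ :
      ∃ y z i i', δ i y = δ i' z ∧ ρ y i = ρ z i' ∧ y ≠ z := by
    by_contra! h
    exact hNotBir ⟨hInv, hRev, h⟩
  intro hfin
  obtain ⟨m, hm, hy⟩ := exists_iterate_eq_id_of_finite_submonoid hfin
    (Submonoid.subset_closure ⟨y, Or.inl rfl⟩) (rhoStar_injective δ ρ (fun x => (hInv x).1) y)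
  have hcross (s : List Γ) :
      rhoWord δ ρ (z :: List.replicate (m - 1) y) (i' :: s) = i :: s := by
    have hzy : rhoStar δ ρ z (i' :: s) = rhoStar δ ρ y (i :: s) := by
      simp only [rhoStar, hδ, hρ]
    rw [rhoWord, hzy, rhoWord_replicate, ← Function.iterate_succ_apply, Nat.succ_eq_add_one,
      Nat.sub_add_cancel hm, hy, id]
  obtain rfl := eq_of_rhoWord_cons_eq δ ρ (fun a => (hRev a).1) hcross
  exact hyz ((hRev i).1 hδ)

/-- Any invertible reversible non-bireversible Mealy
automaton generates an infinite group: the group of (length-preserving)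
bijections of `Γ*` generated by the maps `ρ_x` — i.e. the closure of the
generators together with their inverses under composition — is infinite. -/
theorem infinite_group_of_invertible_reversible_nonbireversible
    {Q Γ : Type*} [Fintype Q] [Fintype Γ] [Nonempty Q] [Nonempty Γ]
    (δ : Γ → Q → Q) (ρ : Q → Γ → Γ)
    (hInv : MInvertible ρ) (hRev : MReversible δ) (hNotBir : ¬ MBireversible δ ρ) :
    Set.Infinite
      ((Submonoid.closure
          {f : Function.End (List Γ) |
            ∃ x : Q, f = rhoStar δ ρ x ∨ f = Function.invFun (rhoStar δ ρ x)} :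
          Submonoid (Function.End (List Γ))) : Set (Function.End (List Γ))) :=
  infinite_group_of_invertible_reversible_nonbireversible_general δ ρ hInv hRev hNotBir
end
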